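/- arXiv:2212.00918 — 6 statements merged into one kernel-verified Lean document; each statement's English description precedes it below -/
import Mathlib

section
/- Let k, l, a and b be positive integers with max{a, b} ≥ 2 and gcd(a, b) = 1. Then every positive rational number r can be written in the form r = φ(k·m^a)/φ(l·n^b) for some positive integers m and n. -/
/-!
Write `r = u / v` and put `C = l u`, `D = k v`. As `gcd(a, b) = 1` there are positive `x, y, x', y'`
with `a x = b y + 1` and `b y' = a x' + 1`, so `m = C^x D^x'` and `n = C^y D^y'` satisfy
`D m^a = C n^b`, i.e. `v · k m^a = u · l n^b`. Both `k m^a` and `l n^b` have the prime factors of `C D`,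
and `φ(N) / N` only depends on the prime factors of `N`; hence
`φ(k m^a) / φ(l n^b) = k m^a / (l n^b) = u / v`.
-/

open Nat

theorem Rat.exists_eq_natCast_div_natCast_of_pos {r : ℚ} (hr : 0 < r) :
    ∃ u v : ℕ, 0 < u ∧ 0 < v ∧ r = u / v := by
  have hnum := Rat.num_pos.mpr hr
  refine ⟨r.num.natAbs, r.den, Int.natAbs_pos.mpr hnum.ne', r.den_pos, ?_⟩
  rw [Nat.cast_natAbs, abs_of_pos hnum]
  exact (Rat.num_div_den r).symm

theorem Nat.Coprime.exists_mul_eq_mul_add_one {a b : ℕ} (hab : a.Coprime b) (ha : 0 < a)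
    (hb : 0 < b) : ∃ x y, 0 < x ∧ 0 < y ∧ a * x = b * y + 1 := by
  obtain ⟨x, -, hx⟩ := Nat.exists_mul_mod_eq_of_coprime 1 hab hb.ne'
  -- shifting by `2 b` keeps the congruence and forces `y > 0`
  have hge : 2 ≤ a * (x + 2 * b) := by nlinarith
  have hmod : 1 ≡ a * (x + 2 * b) [MOD b] := by
    rw [show a * (x + 2 * b) = a * x + b * (2 * a) by ring, Nat.ModEq, Nat.add_mul_mod_self_left]
    exact hx.symm
  obtain ⟨y, hy⟩ := (Nat.modEq_iff_dvd' (by omega)).mp hmod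
  refine ⟨x + 2 * b, y, by omega, Nat.pos_of_ne_zero ?_, by omega⟩
  rintro rfl
  omega

theorem Nat.Coprime.exists_mul_pow_eq_mul_pow {a b C D : ℕ} (hab : a.Coprime b) (ha : 0 < a)
    (hb : 0 < b) (hC : C ≠ 0) (hD : D ≠ 0) :
    ∃ m n, 0 < m ∧ 0 < n ∧ m.primeFactors = (C * D).primeFactors ∧
      n.primeFactors = (C * D).primeFactors ∧ D * m ^ a = C * n ^ b := by
  obtain ⟨x, y, hx, hy, hxy⟩ := hab.exists_mul_eq_mul_add_one ha hb
  obtain ⟨y', x', hy', hx', hyx⟩ := hab.symm.exists_mul_eq_mul_add_one hb ha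
  have primeFactors_eq {i j : ℕ} (hi : 0 < i) (hj : 0 < j) :
      (C ^ i * D ^ j).primeFactors = (C * D).primeFactors := by
    rw [Nat.primeFactors_mul (pow_ne_zero _ hC) (pow_ne_zero _ hD), Nat.primeFactors_pow _ hi.ne',
      Nat.primeFactors_pow _ hj.ne', Nat.primeFactors_mul hC hD]
  refine ⟨C ^ x * D ^ x', C ^ y * D ^ y', by positivity, by positivity, primeFactors_eq hx hx',
    primeFactors_eq hy hy', ?_⟩
  calc D * (C ^ x * D ^ x') ^ a = C ^ (a * x) * D ^ (a * x' + 1) := by ring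
    _ = C ^ (b * y + 1) * D ^ (b * y') := by rw [hxy, hyx]
    _ = C * (C ^ y * D ^ y') ^ b := by ring

theorem Nat.primeFactors_mul_pow_of_primeFactors_eq {k m M a : ℕ}
    (hm : m.primeFactors = M.primeFactors) (hm0 : m ≠ 0) (hk : k ∣ M) (hM : M ≠ 0) (ha : a ≠ 0) :
    (k * m ^ a).primeFactors = M.primeFactors := by
  rw [Nat.primeFactors_mul (ne_zero_of_dvd_ne_zero hM hk) (pow_ne_zero _ hm0),
    Nat.primeFactors_pow _ ha, hm]
  exact Finset.union_eq_right.mpr (Nat.primeFactors_mono hk hM)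

theorem Nat.totient_div_totient_of_primeFactors_eq {N₁ N₂ : ℕ}
    (h : N₁.primeFactors = N₂.primeFactors) : (φ N₁ : ℚ) / φ N₂ = N₁ / N₂ := by
  have hprod : ∏ p ∈ N₂.primeFactors, (1 - (p : ℚ)⁻¹) ≠ 0 := by
    refine Finset.prod_ne_zero_iff.mpr fun p hp => sub_ne_zero.mpr ?_
    have : (1 : ℚ) < p := by exact_mod_cast (Nat.prime_of_mem_primeFactors hp).one_lt
    exact (inv_lt_one_of_one_lt₀ this).ne'
  rw [totient_eq_mul_prod_factors, totient_eq_mul_prod_factors, h, mul_div_mul_right _ _ hprod]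

theorem stmt_0_general (k l a b : ℕ) (hk : 0 < k) (hl : 0 < l) (ha : 0 < a) (hb : 0 < b)
    (hab : Nat.gcd a b = 1) (r : ℚ) (hr : 0 < r) :
    ∃ m n : ℕ, 0 < m ∧ 0 < n ∧
      r = (Nat.totient (k * m ^ a) : ℚ) / (Nat.totient (l * n ^ b) : ℚ) := by
  obtain ⟨u, v, hu, hv, rfl⟩ := Rat.exists_eq_natCast_div_natCast_of_pos hr
  have hM : l * u * (k * v) ≠ 0 := by positivity
  obtain ⟨m, n, hm, hn, hpm, hpn, hmn⟩ :=
    Nat.Coprime.exists_mul_pow_eq_mul_pow hab ha hb (mul_pos hl hu).ne' (mul_pos hk hv).ne'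
  refine ⟨m, n, hm, hn, ?_⟩
  have hpk := Nat.primeFactors_mul_pow_of_primeFactors_eq hpm hm.ne'
    (dvd_mul_of_dvd_right (dvd_mul_right k v) _) hM ha.ne'
  have hpl := Nat.primeFactors_mul_pow_of_primeFactors_eq hpn hn.ne'
    ((dvd_mul_right l u).mul_right _) hM hb.ne'
  rw [Nat.totient_div_totient_of_primeFactors_eq (hpk.trans hpl.symm),
    div_eq_div_iff (by positivity) (by positivity)]
  exact_mod_cast (by linarith [hmn] : u * (l * n ^ b) = k * m ^ a * v)

theorem stmt_0 (k l a b : ℕ) (hk : 0 < k) (hl : 0 < l) (ha : 0 < a) (hb : 0 < b)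
    (hmax : 2 ≤ max a b) (hab : Nat.gcd a b = 1) (r : ℚ) (hr : 0 < r) :
    ∃ m n : ℕ, 0 < m ∧ 0 < n ∧
      r = (Nat.totient (k * m ^ a) : ℚ) / (Nat.totient (l * n ^ b) : ℚ) :=
  stmt_0_general k l a b hk hl ha hb hab r hr
end

section
/- Every positive rational number r can be written in the form r = φ(m^2)/φ(n^2) for some positive integers m and n. -/
/-!
For a prime `p` and a `p`-smooth `m`,
`φ ((p ^ (k + 1) * m) ^ 2) = p ^ (2 * k + 1) * (p - 1) * φ (m ^ 2)`. So the largest prime `p` of `a / b` can be split off: an odd power `p ^ (2 * k + 1)` comes from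
`p ^ (k + 1)` in `m` at the cost of a factor `p - 1`, which is moved to `b` and has only smaller
prime factors; an even power `p ^ (2 * k)` is `φ (p ^ (2 * k + 2)) / φ (p ^ 2)`. Induction on the
smoothness bound finishes.
-/

open Nat

namespace Nat

lemma totient_sq_prime_pow_succ_mul {p m : ℕ} (hp : p.Prime) (hm : m ∈ p.smoothNumbers) (k : ℕ) :
    φ ((p ^ (k + 1) * m) ^ 2) = p ^ (2 * k + 1) * (p - 1) * φ (m ^ 2) := by
  have hcop : Coprime ((p ^ (k + 1)) ^ 2) (m ^ 2) :=
    ((hp.smoothNumbers_coprime hm).pow_left _).pow _ _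
  rw [mul_pow, totient_mul hcop, ← pow_mul, show (k + 1) * 2 = 2 * k + 1 + 1 by ring,
    totient_prime_pow_succ hp]

/-- `a / b = φ (m ^ 2) / φ (n ^ 2)` for some `N`-smooth `m` and `n`. -/
def IsSmoothTotientSqRatio (N a b : ℕ) : Prop :=
  ∃ m ∈ N.smoothNumbers, ∃ n ∈ N.smoothNumbers, a * φ (n ^ 2) = b * φ (m ^ 2)

namespace IsSmoothTotientSqRatio

variable {N a b : ℕ}

lemma symm (h : IsSmoothTotientSqRatio N a b) : IsSmoothTotientSqRatio N b a := by
  obtain ⟨m, hm, n, hn, h⟩ := h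
  exact ⟨n, hn, m, hm, h.symm⟩

lemma mul_left (c : ℕ) (h : IsSmoothTotientSqRatio N a b) :
    IsSmoothTotientSqRatio N (c * a) (c * b) := by
  obtain ⟨m, hm, n, hn, h⟩ := h
  exact ⟨m, hm, n, hn, by rw [mul_assoc, h, mul_assoc]⟩

lemma prime_pow_mul {p : ℕ} (hp : p.Prime)
    (ih : ∀ a ∈ p.smoothNumbers, ∀ b ∈ p.smoothNumbers, IsSmoothTotientSqRatio p a b)
    (d : ℕ) (ha : a ∈ p.smoothNumbers) (hb : b ∈ p.smoothNumbers) :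
    IsSmoothTotientSqRatio (p + 1) (p ^ d * a) b := by
  have hp0 := hp.ne_zero
  obtain ⟨k, rfl | rfl⟩ := d.even_or_odd'
  · obtain ⟨m, hm, n, hn, h⟩ := ih a ha b hb
    refine ⟨p ^ (k + 1) * m, pow_mul_mem_smoothNumbers hp0 _ hm,
      p ^ (0 + 1) * n, pow_mul_mem_smoothNumbers hp0 _ hn, ?_⟩
    rw [totient_sq_prime_pow_succ_mul hp hm, totient_sq_prime_pow_succ_mul hp hn]
    calc p ^ (2 * k) * a * (p ^ (2 * 0 + 1) * (p - 1) * φ (n ^ 2))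
        = p ^ (2 * k + 1) * (p - 1) * (a * φ (n ^ 2)) := by ring
      _ = b * (p ^ (2 * k + 1) * (p - 1) * φ (m ^ 2)) := by rw [h]; ring
  · have hp1 : p - 1 ∈ p.smoothNumbers :=
      mem_smoothNumbers_of_lt (by have := hp.two_le; omega) (by omega)
    obtain ⟨m, hm, n, hn, h⟩ := ih a ha (b * (p - 1)) (mul_mem_smoothNumbers hb hp1)
    refine ⟨p ^ (k + 1) * m, pow_mul_mem_smoothNumbers hp0 _ hm,
      n, smoothNumbers_mono p.le_succ hn, ?_⟩
    rw [totient_sq_prime_pow_succ_mul hp hm, mul_assoc, h]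
    ring

lemma prime_pow_mul_prime_pow {p : ℕ} (hp : p.Prime)
    (ih : ∀ a ∈ p.smoothNumbers, ∀ b ∈ p.smoothNumbers, IsSmoothTotientSqRatio p a b)
    (α β : ℕ) (ha : a ∈ p.smoothNumbers) (hb : b ∈ p.smoothNumbers) :
    IsSmoothTotientSqRatio (p + 1) (p ^ α * a) (p ^ β * b) := by
  rcases le_total β α with hle | hle
  · obtain ⟨d, rfl⟩ := Nat.exists_eq_add_of_le hle
    rw [pow_add, mul_assoc]
    exact (prime_pow_mul hp ih d ha hb).mul_left _
  · obtain ⟨d, rfl⟩ := Nat.exists_eq_add_of_le hle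
    rw [pow_add, mul_assoc]
    exact ((prime_pow_mul hp ih d hb ha).mul_left _).symm

theorem of_mem_smoothNumbers (ha : a ∈ N.smoothNumbers) (hb : b ∈ N.smoothNumbers) :
    IsSmoothTotientSqRatio N a b := by
  induction N generalizing a b with
  | zero =>
    rw [smoothNumbers_zero, Set.mem_singleton_iff] at ha hb
    subst ha hb
    exact ⟨1, by simp [smoothNumbers_zero], 1, by simp [smoothNumbers_zero], rfl⟩
  | succ p ih =>
    by_cases hp : p.Prime
    · obtain ⟨⟨α, a', ha'⟩, hα⟩ := (equivProdNatSmoothNumbers hp).surjective ⟨a, ha⟩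
      obtain ⟨⟨β, b', hb'⟩, hβ⟩ := (equivProdNatSmoothNumbers hp).surjective ⟨b, hb⟩
      obtain rfl : p ^ α * a' = a := congrArg Subtype.val hα
      obtain rfl : p ^ β * b' = b := congrArg Subtype.val hβ
      exact prime_pow_mul_prime_pow hp (fun a ha b hb ↦ ih ha hb) α β ha' hb'
    · rw [smoothNumbers_succ hp] at ha hb
      simpa only [IsSmoothTotientSqRatio, smoothNumbers_succ hp] using ih ha hb

end IsSmoothTotientSqRatio

end Nat

theorem stmt_1 (r : ℚ) (hr : 0 < r) :
    ∃ m n : ℕ, 0 < m ∧ 0 < n ∧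
      r = (Nat.totient (m ^ 2) : ℚ) / (Nat.totient (n ^ 2) : ℚ) := by
  obtain ⟨a, ha, hra⟩ : ∃ a : ℕ, 0 < a ∧ r = a / r.den :=
    ⟨r.num.natAbs, Int.natAbs_pos.2 (Rat.num_pos.2 hr).ne', by
      rw [Nat.cast_natAbs, Int.cast_abs, abs_of_pos (by exact_mod_cast Rat.num_pos.2 hr),
        Rat.num_div_den]⟩
  have hb := r.den_pos
  obtain ⟨m, hm, n, hn, h⟩ := IsSmoothTotientSqRatio.of_mem_smoothNumbers
    (mem_smoothNumbers_of_lt ha (Nat.lt_succ_of_le (Nat.le_mul_of_pos_right a hb)))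
    (mem_smoothNumbers_of_lt hb (Nat.lt_succ_of_le (Nat.le_mul_of_pos_left r.den ha)))
  have hm0 := pos_of_ne_zero (ne_zero_of_mem_smoothNumbers hm)
  have hn0 := pos_of_ne_zero (ne_zero_of_mem_smoothNumbers hn)
  refine ⟨m, n, hm0, hn0, ?_⟩
  rw [hra, div_eq_div_iff (by positivity) (by simp [hn0.ne']), mul_comm _ (r.den : ℚ)]
  exact_mod_cast h
end

section
/- Let k, l, a and b be positive integers with μ := gcd(a, b) > 2, let p be a prime with p > P(k·l), and let t be a positive integer with t ≡ 1 (mod μ). Then there are no positive integers m and n with p^t = φ(k·m^a)/φ(l·n^b). -/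
/-!
Descent on `m * n`. Let `q` be the largest prime factor of `m n p`; then `q ≥ p` exceeds every
prime factor of `k l`. If every prime factor of `N` is at most `q`, then `v_q(φ N) = v_q(N) - 1`,
because `φ` of the `q`-free part of `N` is a product of factors `r ^ i * (r - 1)` with `r < q`.
Comparing `q`-adic valuations in `φ(k m^a) = p^t φ(l n^b)`: if `q = p` this reads
`a v_p(m) - 1 = t + (b v_p(n) - 1)`, impossible since `μ` divides `a` and `b`, `t ≡ 1 (mod μ)` and
`μ > 2`; if `q ≠ p` it forces `a v_q(m) = b v_q(n)`, so the `q`-parts cancel and removing `q` from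
`m` and `n` gives a smaller solution.
-/

/-- The largest prime factor of `n`, with the convention that it is `1`
when `n` has no prime factors (in particular `P(1) = 1`). -/
def maxPrimeFac (n : ℕ) : ℕ := WithBot.unbotD 1 n.primeFactors.max

open Nat

theorem le_maxPrimeFac {r N : ℕ} (hr : r ∈ N.primeFactors) : r ≤ maxPrimeFac N := by
  rw [maxPrimeFac, ← Finset.coe_max' ⟨r, hr⟩, WithBot.unbotD_coe]
  exact Finset.le_max' _ _ hr

namespace Nat

theorem factorization_totient_prime_pow {q : ℕ} (hq : q.Prime) (e : ℕ) :
    (φ (q ^ e)).factorization q = e - 1 := by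
  rcases e.eq_zero_or_pos with rfl | he
  · simp
  have hq2 := hq.two_le
  have hq1 : ¬ q ∣ q - 1 := Nat.not_dvd_of_pos_of_lt (by omega) (by omega)
  rw [totient_prime_pow hq he, factorization_mul (pow_pos hq.pos _).ne' (by omega),
    Finsupp.add_apply, hq.factorization_pow, Finsupp.single_eq_same,
    factorization_eq_zero_of_not_dvd hq1, add_zero]

theorem not_dvd_totient_of_primeFactors_lt {q N : ℕ} (hq : q.Prime) (hN : N ≠ 0)
    (h : ∀ r ∈ N.primeFactors, r < q) : ¬ q ∣ φ N := by
  rw [totient_eq_prod_factorization hN, Finsupp.prod, support_factorization]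
  intro hdvd
  obtain ⟨r, hr, hqr⟩ := (Prime.dvd_finsetProd_iff hq.prime _).mp hdvd
  have hrq := h r hr
  have hr2 := (prime_of_mem_primeFactors hr).two_le
  rcases (Nat.Prime.dvd_mul hq).mp hqr with hpow | hsub
  · have := (prime_dvd_prime_iff_eq hq (prime_of_mem_primeFactors hr)).mp
      (hq.dvd_of_dvd_pow hpow)
    omega
  · have := Nat.le_of_dvd (by omega) hsub
    omega

theorem totient_mul_pow_eq_mul_totient_ordCompl {q k m : ℕ} (a : ℕ) (hq : q.Prime)
    (hqk : ¬ q ∣ k) (hm : m ≠ 0) :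
    φ (k * m ^ a) = φ (q ^ (a * m.factorization q)) * φ (k * (ordCompl[q] m) ^ a) := by
  have hcop : (q ^ (a * m.factorization q)).Coprime (k * (ordCompl[q] m) ^ a) :=
    Coprime.pow_left _ (Coprime.mul_right ((Nat.Prime.coprime_iff_not_dvd hq).mpr hqk)
      ((coprime_ordCompl hq hm).pow_right a))
  conv_lhs => rw [← ordProj_mul_ordCompl_eq_self m q]
  rw [← totient_mul hcop, mul_pow, ← pow_mul, mul_comm _ a, mul_left_comm]

theorem factorization_totient_mul_pow {q k m : ℕ} (a : ℕ) (hq : q.Prime) (hk : k ≠ 0)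
    (hm : m ≠ 0) (hkq : ∀ r ∈ k.primeFactors, r < q) (hmq : ∀ r ∈ m.primeFactors, r ≤ q) :
    (φ (k * m ^ a)).factorization q = a * m.factorization q - 1 := by
  have hqk : ¬ q ∣ k := fun h ↦ (hkq q (mem_primeFactors.mpr ⟨hq, h, hk⟩)).false
  have hm' : ordCompl[q] m ≠ 0 := (ordCompl_pos q hm).ne'
  have hlt : ∀ r ∈ (k * (ordCompl[q] m) ^ a).primeFactors, r < q := by
    intro r hr
    have hr' := prime_of_mem_primeFactors hr
    rcases (Nat.Prime.dvd_mul hr').mp (dvd_of_mem_primeFactors hr) with hrk | hrm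
    · exact hkq r (mem_primeFactors.mpr ⟨hr', hrk, hk⟩)
    · have hrm := hr'.dvd_of_dvd_pow hrm
      have hrm' := mem_primeFactors.mpr ⟨hr', hrm.trans (ordCompl_dvd m q), hm⟩
      refine (hmq r hrm').lt_of_ne ?_
      rintro rfl
      exact not_dvd_ordCompl hr' hm hrm
  have hN : k * (ordCompl[q] m) ^ a ≠ 0 := mul_ne_zero hk (pow_ne_zero _ hm')
  rw [totient_mul_pow_eq_mul_totient_ordCompl a hq hqk hm,
    factorization_mul (totient_eq_zero.not.mpr (pow_ne_zero _ hq.ne_zero))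
      (totient_eq_zero.not.mpr hN), Finsupp.add_apply,
    factorization_totient_prime_pow hq,
    factorization_eq_zero_of_not_dvd (not_dvd_totient_of_primeFactors_lt hq hN hlt), add_zero]

theorem ordCompl_lt {q N : ℕ} (hq : q.Prime) (hN : N ≠ 0) (h : q ∣ N) : ordCompl[q] N < N :=
  Nat.div_lt_self (Nat.pos_of_ne_zero hN)
    (Nat.one_lt_pow (hq.factorization_pos_of_dvd hN h).ne' hq.one_lt)

end Nat

theorem sub_one_ne_add_sub_one_of_dvd {μ t x y : ℕ} (hμ : 2 < μ) (ht : t % μ = 1)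
    (hx : μ ∣ x) (hy : μ ∣ y) : x - 1 ≠ t + (y - 1) := by
  intro h
  have ht0 : t ≠ 0 := by rintro rfl; simp at ht
  rcases y.eq_zero_or_pos with rfl | hy0
  · -- `μ` divides both `t + 1 = x` and `t - 1`
    have h2 := Nat.dvd_sub (show μ ∣ t + 1 by rwa [show t + 1 = x by omega])
      (ht ▸ Nat.dvd_sub_mod t)
    rw [show t + 1 - (t - 1) = 2 by omega] at h2
    have := Nat.le_of_dvd two_pos h2
    omega
  · have hμt : μ ∣ t := (Nat.dvd_add_left hy).mp (show x = t + y by omega ▸ hx)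
    simp [Nat.mod_eq_zero_of_dvd hμt] at ht

theorem eq_of_sub_one_eq_of_dvd {μ x y : ℕ} (hμ : 1 < μ) (hx : μ ∣ x) (hy : μ ∣ y)
    (h : x - 1 = y - 1) : x = y := by
  have hx1 : x ≠ 1 := by rintro rfl; exact absurd (Nat.le_of_dvd one_pos hx) (by omega)
  have hy1 : y ≠ 1 := by rintro rfl; exact absurd (Nat.le_of_dvd one_pos hy) (by omega)
  omega

section Descent

variable {k l a b μ t p : ℕ}

theorem exists_lt_totient_mul_pow_eq_mul_totient_ordCompl (hk : k ≠ 0) (hl : l ≠ 0)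
    (hkp : ∀ r ∈ k.primeFactors, r < p) (hlp : ∀ r ∈ l.primeFactors, r < p)
    (hμa : μ ∣ a) (hμb : μ ∣ b) (hμ : 2 < μ) (ht : t % μ = 1) (hp : p.Prime)
    {m n : ℕ} (hm : m ≠ 0) (hn : n ≠ 0) (h : φ (k * m ^ a) = p ^ t * φ (l * n ^ b)) :
    ∃ m' n', m' ≠ 0 ∧ n' ≠ 0 ∧ m' * n' < m * n ∧ φ (k * m' ^ a) = p ^ t * φ (l * n' ^ b) := by
  have hmn : m * n ≠ 0 := mul_ne_zero hm hn
  have hmnp : m * n * p ≠ 0 := mul_ne_zero hmn hp.ne_zero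
  have hpS : p ∈ (m * n * p).primeFactors := mem_primeFactors.mpr ⟨hp, dvd_mul_left _ _, hmnp⟩
  set q := (m * n * p).primeFactors.max' ⟨p, hpS⟩
  have hqS : q ∈ (m * n * p).primeFactors := Finset.max'_mem _ _
  have hq : q.Prime := prime_of_mem_primeFactors hqS
  have hpq : p ≤ q := Finset.le_max' _ _ hpS
  have hmq : ∀ r ∈ m.primeFactors, r ≤ q := fun r hr ↦ Finset.le_max' _ _ <|
    primeFactors_mono ((dvd_mul_right m n).mul_right p) hmnp hr
  have hnq : ∀ r ∈ n.primeFactors, r ≤ q := fun r hr ↦ Finset.le_max' _ _ <|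
    primeFactors_mono ((dvd_mul_left n m).mul_right p) hmnp hr
  have hkq : ∀ r ∈ k.primeFactors, r < q := fun r hr ↦ (hkp r hr).trans_le hpq
  have hlq : ∀ r ∈ l.primeFactors, r < q := fun r hr ↦ (hlp r hr).trans_le hpq
  have hval := congrArg (fun N ↦ N.factorization q) h
  rw [Nat.factorization_mul (pow_ne_zero _ hp.ne_zero) (totient_eq_zero.not.mpr
      (mul_ne_zero hl (pow_ne_zero _ hn))), Finsupp.add_apply,
    factorization_totient_mul_pow a hq hk hm hkq hmq,
    factorization_totient_mul_pow b hq hl hn hlq hnq] at hval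
  rcases eq_or_ne q p with hqp | hqp
  · rw [← hqp, hq.factorization_pow, Finsupp.single_eq_same] at hval
    exact absurd hval (sub_one_ne_add_sub_one_of_dvd hμ ht (hμa.mul_right _) (hμb.mul_right _))
  · rw [factorization_eq_zero_of_not_dvd (fun h ↦ hqp ((prime_dvd_prime_iff_eq hq hp).mp
      (hq.dvd_of_dvd_pow h))), zero_add] at hval
    have hαβ := eq_of_sub_one_eq_of_dvd (by omega) (hμa.mul_right _) (hμb.mul_right _) hval
    have hqmn : q ∣ m * n :=
      ((Nat.Prime.dvd_mul hq).mp (dvd_of_mem_primeFactors hqS)).resolve_right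
        fun h ↦ hqp ((prime_dvd_prime_iff_eq hq hp).mp h)
    have hqk : ¬ q ∣ k := fun h ↦ (hkq q (mem_primeFactors.mpr ⟨hq, h, hk⟩)).false
    have hql : ¬ q ∣ l := fun h ↦ (hlq q (mem_primeFactors.mpr ⟨hq, h, hl⟩)).false
    refine ⟨ordCompl[q] m, ordCompl[q] n, (ordCompl_pos q hm).ne', (ordCompl_pos q hn).ne',
      ?_, ?_⟩
    · rw [← ordCompl_mul]
      exact ordCompl_lt hq hmn hqmn
    · rw [totient_mul_pow_eq_mul_totient_ordCompl a hq hqk hm,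
        totient_mul_pow_eq_mul_totient_ordCompl b hq hql hn, hαβ, mul_left_comm] at h
      exact mul_left_cancel₀ (totient_eq_zero.not.mpr (pow_ne_zero _ hq.ne_zero)) h

theorem totient_mul_pow_ne (hk : k ≠ 0) (hl : l ≠ 0)
    (hkp : ∀ r ∈ k.primeFactors, r < p) (hlp : ∀ r ∈ l.primeFactors, r < p)
    (hμa : μ ∣ a) (hμb : μ ∣ b) (hμ : 2 < μ) (ht : t % μ = 1) (hp : p.Prime)
    {m n : ℕ} (hm : m ≠ 0) (hn : n ≠ 0) : φ (k * m ^ a) ≠ p ^ t * φ (l * n ^ b) := by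
  induction hN : m * n using Nat.strong_induction_on generalizing m n with
  | _ N ih =>
    intro h
    obtain ⟨m', n', hm', hn', hlt, h'⟩ :=
      exists_lt_totient_mul_pow_eq_mul_totient_ordCompl hk hl hkp hlp hμa hμb hμ ht hp hm hn h
    exact ih _ (hN ▸ hlt) hm' hn' rfl h'

end Descent

theorem stmt_3_general (k l a b μ t : ℕ) (hμ : μ = Nat.gcd a b) (hμ2 : 2 < μ) (p : ℕ) (hp : p.Prime)
    (hpkl : maxPrimeFac (k * l) < p) (htμ : t % μ = 1) :
    ¬ ∃ m n : ℕ, 0 < m ∧ 0 < n ∧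
      (p : ℚ) ^ t = (Nat.totient (k * m ^ a) : ℚ) / (Nat.totient (l * n ^ b) : ℚ) := by
  rintro ⟨m, n, hm, hn, h⟩
  -- a zero denominator would make the right-hand side `0` in `ℚ`
  have hB : φ (l * n ^ b) ≠ 0 := fun hB ↦ by simp [hB, hp.ne_zero] at h
  have h' : φ (k * m ^ a) = p ^ t * φ (l * n ^ b) := by
    rw [eq_div_iff (by exact_mod_cast hB)] at h
    exact_mod_cast h.symm
  have hA : φ (k * m ^ a) ≠ 0 := h' ▸ mul_ne_zero (pow_ne_zero _ hp.ne_zero) hB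
  have hk : k ≠ 0 := left_ne_zero_of_mul (totient_eq_zero.not.mp hA)
  have hl : l ≠ 0 := left_ne_zero_of_mul (totient_eq_zero.not.mp hB)
  have hklp : ∀ r ∈ (k * l).primeFactors, r < p := fun r hr ↦ (le_maxPrimeFac hr).trans_lt hpkl
  subst hμ
  exact totient_mul_pow_ne hk hl
    (fun r hr ↦ hklp r (primeFactors_mono (dvd_mul_right k l) (mul_ne_zero hk hl) hr))
    (fun r hr ↦ hklp r (primeFactors_mono (dvd_mul_left l k) (mul_ne_zero hk hl) hr))
    (Nat.gcd_dvd_left a b) (Nat.gcd_dvd_right a b) hμ2 htμ hp hm.ne' hn.ne' h'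

theorem stmt_3 (k l a b μ t : ℕ) (hk : 0 < k) (hl : 0 < l) (ha : 0 < a) (hb : 0 < b)
    (hμ : μ = Nat.gcd a b) (hμ2 : 2 < μ) (p : ℕ) (hp : p.Prime)
    (hpkl : maxPrimeFac (k * l) < p) (ht : 0 < t) (htμ : t % μ = 1) :
    ¬ ∃ m n : ℕ, 0 < m ∧ 0 < n ∧
      (p : ℚ) ^ t = (Nat.totient (k * m ^ a) : ℚ) / (Nat.totient (l * n ^ b) : ℚ) :=
  stmt_3_general k l a b μ t hμ hμ2 p hp hpkl htμ
end

section
/- Let k and l be positive integers with k > 1, let p = P(k·l) be the largest prime factor of k·l, and suppose p divides k but p does not divide l. Then there are no positive integers m and n such that the rational number p^{−v_p(k) − 1} equals φ(k·m^2)/φ(l·n^2), where v_p denotes the p-adic valuation. -/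
open Nat

lemma maxPrimeFac_mem {n : ℕ} (hn : 1 < n) : maxPrimeFac n ∈ n.primeFactors := by
  have hne : n.primeFactors.Nonempty := Nat.nonempty_primeFactors.mpr hn
  rw [maxPrimeFac, ← Finset.coe_max' hne, WithBot.unbotD_coe]
  exact Finset.max'_mem _ hne

lemma le_maxPrimeFac_s6 {n q : ℕ} (hq : q ∈ n.primeFactors) : q ≤ maxPrimeFac n := by
  have hne : n.primeFactors.Nonempty := ⟨q, hq⟩
  rw [maxPrimeFac, ← Finset.coe_max' hne, WithBot.unbotD_coe]
  exact Finset.le_max' _ _ hq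

lemma Nat.Prime.not_dvd_totient_of_forall_lt {Q N : ℕ} (hQ : Q.Prime) (hN : N ≠ 0)
    (h : ∀ q ∈ N.primeFactors, q < Q) : ¬ Q ∣ φ N := by
  rw [totient_eq_prod_factorization hN, Finsupp.prod, support_factorization]
  intro hdvd
  obtain ⟨q, hq, hdvd⟩ := (hQ.prime.dvd_finsetProd_iff _).1 hdvd
  have hqQ := h q hq
  have hq2 := (prime_of_mem_primeFactors hq).two_le
  rcases hQ.dvd_mul.1 hdvd with hdvd | hdvd
  · exact absurd (le_of_dvd (by omega) (hQ.dvd_of_dvd_pow hdvd)) (by omega)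
  · exact absurd (le_of_dvd (by omega) hdvd) (by omega)

lemma Nat.factorization_totient_prime_pow_s6 {Q : ℕ} (hQ : Q.Prime) (e : ℕ) :
    (φ (Q ^ e)).factorization Q = e - 1 := by
  rcases Nat.eq_zero_or_pos e with rfl | he
  · simp
  have hQ2 := hQ.two_le
  have hQ1 : ¬ Q ∣ Q - 1 := fun h => absurd (le_of_dvd (by omega) h) (by omega)
  rw [totient_prime_pow hQ he, factorization_mul (pow_ne_zero _ hQ.ne_zero) (by omega),
    Finsupp.add_apply, factorization_pow, Finsupp.smul_apply, hQ.factorization_self,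
    factorization_eq_zero_of_not_dvd hQ1, smul_eq_mul, mul_one, add_zero]

lemma Nat.factorization_totient_of_forall_le {Q N : ℕ} (hQ : Q.Prime)
    (h : ∀ q ∈ N.primeFactors, q ≤ Q) :
    (φ N).factorization Q = N.factorization Q - 1 := by
  rcases eq_or_ne N 0 with rfl | hN
  · simp
  have hcompl : ordCompl[Q] N ≠ 0 := (ordCompl_pos Q hN).ne'
  have hQcompl : ¬ Q ∣ φ (ordCompl[Q] N) := by
    refine hQ.not_dvd_totient_of_forall_lt hcompl fun q hq => lt_of_le_of_ne
      (h q (primeFactors_mono (ordCompl_dvd N Q) hN hq)) ?_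
    rintro rfl
    exact not_dvd_ordCompl hQ hN (dvd_of_mem_primeFactors hq)
  have hsplit : φ N = φ (Q ^ N.factorization Q) * φ (ordCompl[Q] N) := by
    rw [← totient_mul ((coprime_ordCompl hQ hN).pow_left _), ordProj_mul_ordCompl_eq_self]
  rw [hsplit, factorization_mul (totient_pos.2 (pow_pos hQ.pos _)).ne'
    (totient_pos.2 (pos_of_ne_zero hcompl)).ne', Finsupp.add_apply,
    factorization_eq_zero_of_not_dvd hQcompl, add_zero, factorization_totient_prime_pow_s6 hQ]

lemma Nat.factorization_totient_mul_sq {Q c n : ℕ} (hQ : Q.Prime) (hc : c ≠ 0) (hn : n ≠ 0)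
    (hcQ : ∀ q ∈ c.primeFactors, q ≤ Q) (hnQ : ∀ q ∈ n.primeFactors, q ≤ Q) :
    (φ (c * n ^ 2)).factorization Q = c.factorization Q + 2 * n.factorization Q - 1 := by
  rw [factorization_totient_of_forall_le hQ, factorization_mul hc (pow_ne_zero 2 hn),
    Finsupp.add_apply, factorization_pow, Finsupp.smul_apply, smul_eq_mul]
  simp only [primeFactors_mul hc (pow_ne_zero 2 hn), primeFactors_pow _ two_ne_zero,
    Finset.mem_union]
  rintro q (hq | hq)
  exacts [hcQ q hq, hnQ q hq]

lemma Nat.totient_mul_sq_eq_mul_totient_ordCompl {Q c n : ℕ} (hQ : Q.Prime) (hc : ¬ Q ∣ c) :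
    φ (c * n ^ 2) = φ (Q ^ (2 * n.factorization Q)) * φ (c * (ordCompl[Q] n) ^ 2) := by
  rcases eq_or_ne n 0 with rfl | hn
  · simp
  have hcop : ¬ Q ∣ c * (ordCompl[Q] n) ^ 2 := fun h =>
    (hQ.dvd_mul.1 h).elim hc fun h => not_dvd_ordCompl hQ hn (hQ.dvd_of_dvd_pow h)
  rw [← totient_mul ((hQ.coprime_iff_not_dvd.2 hcop).pow_left _)]
  conv_lhs => rw [← ordProj_mul_ordCompl_eq_self n Q]
  ring_nf

lemma Nat.totient_mul_sq_ordCompl_eq {Q c d r m n : ℕ} (hQ : Q.Prime) (hc : ¬ Q ∣ c)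
    (hd : ¬ Q ∣ d) (hmn : m.factorization Q = n.factorization Q)
    (h : φ (c * n ^ 2) = r * φ (d * m ^ 2)) :
    φ (c * (ordCompl[Q] n) ^ 2) = r * φ (d * (ordCompl[Q] m) ^ 2) := by
  refine mul_left_cancel₀ (totient_pos.2 (pow_pos hQ.pos (2 * n.factorization Q))).ne' ?_
  rw [mul_left_comm, ← hmn, ← totient_mul_sq_eq_mul_totient_ordCompl hQ hd, hmn,
    ← totient_mul_sq_eq_mul_totient_ordCompl hQ hc, h]

lemma Nat.totient_mul_sq_ne_pow_mul_totient_mul_sq {p k l : ℕ} (hp : p.Prime) (hk : k ≠ 0)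
    (hkp : ∀ q ∈ k.primeFactors, q ≤ p) (hlp : ∀ q ∈ l.primeFactors, q ≤ p)
    (hpk : p ∣ k) (hpl : ¬ p ∣ l) {m n : ℕ} (hm : m ≠ 0) (hn : n ≠ 0) :
    φ (l * n ^ 2) ≠ p ^ (k.factorization p + 1) * φ (k * m ^ 2) := by
  induction m using Nat.strong_induction_on generalizing n with
  | _ m ih =>
  intro heq
  have hl : l ≠ 0 := by rintro rfl; exact hpl (dvd_zero p)
  have hpmn : p * m * n ≠ 0 := mul_ne_zero (mul_ne_zero hp.ne_zero hm) hn
  have hp_mem : p ∈ (p * m * n).primeFactors :=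
    mem_primeFactors.2 ⟨hp, (dvd_mul_right p m).mul_right n, hpmn⟩
  obtain ⟨Q, hQ, hQmax⟩ : ∃ Q ∈ (p * m * n).primeFactors,
      ∀ q ∈ (p * m * n).primeFactors, q ≤ Q :=
    ⟨_, Finset.max'_mem _ ⟨p, hp_mem⟩, fun q hq => Finset.le_max' _ q hq⟩
  have hQp := prime_of_mem_primeFactors hQ
  have hpQ : p ≤ Q := hQmax p hp_mem
  have hmQ : ∀ q ∈ m.primeFactors, q ≤ Q := fun q hq =>
    hQmax q (primeFactors_mono ((dvd_mul_left m p).mul_right n) hpmn hq)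
  have hnQ : ∀ q ∈ n.primeFactors, q ≤ Q := fun q hq =>
    hQmax q (primeFactors_mono (dvd_mul_left n _) hpmn hq)
  have hval : (φ (l * n ^ 2)).factorization Q =
      (p ^ (k.factorization p + 1) * φ (k * m ^ 2)).factorization Q := by rw [heq]
  rw [factorization_mul (pow_ne_zero _ hp.ne_zero) (totient_pos.2 (by positivity)).ne',
    Finsupp.add_apply, factorization_pow, Finsupp.smul_apply, smul_eq_mul,
    factorization_totient_mul_sq hQp hl hn (fun q hq => (hlp q hq).trans hpQ) hnQ,
    factorization_totient_mul_sq hQp hk hm (fun q hq => (hkp q hq).trans hpQ) hmQ] at hval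
  rcases hpQ.eq_or_lt with rfl | hpQ
  · -- the `p`-adic valuation of the left side is odd or zero, that of the right side even and
    -- positive
    have ha := hp.factorization_pos_of_dvd hk hpk
    rw [factorization_eq_zero_of_not_dvd hpl, hp.factorization_self] at hval
    omega
  · have hQl : ¬ Q ∣ l := fun h => absurd (hlp Q (mem_primeFactors.2 ⟨hQp, h, hl⟩)) (by omega)
    have hQk : ¬ Q ∣ k := fun h => absurd (hkp Q (mem_primeFactors.2 ⟨hQp, h, hk⟩)) (by omega)
    have hQp' : ¬ Q ∣ p := fun h => by
      have := (prime_dvd_prime_iff_eq hQp hp).1 h; omega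
    rw [factorization_eq_zero_of_not_dvd hQl, factorization_eq_zero_of_not_dvd hQk,
      factorization_eq_zero_of_not_dvd hQp'] at hval
    have hvw : m.factorization Q = n.factorization Q := by omega
    have hQmn : Q ∣ m * n :=
      (hQp.dvd_mul.1 (mul_assoc p m n ▸ dvd_of_mem_primeFactors hQ)).resolve_left hQp'
    have hv : 0 < m.factorization Q := by
      rcases hQp.dvd_mul.1 hQmn with h | h
      · exact hQp.factorization_pos_of_dvd hm h
      · exact hvw ▸ hQp.factorization_pos_of_dvd hn h
    refine ih (ordCompl[Q] m) ?_ (ordCompl_pos Q hm).ne' (ordCompl_pos Q hn).ne'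
      (totient_mul_sq_ordCompl_eq hQp hQl hQk hvw heq)
    exact div_lt_self (pos_of_ne_zero hm) (one_lt_pow hv.ne' hQp.one_lt)

theorem stmt_6 (k l p : ℕ) (hk : 1 < k) (hl : 0 < l)
    (hp : p = maxPrimeFac (k * l)) (hdvdk : p ∣ k) (hndvdl : ¬ p ∣ l) :
    ¬ ∃ m n : ℕ, 0 < m ∧ 0 < n ∧
      (p : ℚ) ^ (-(padicValNat p k : ℤ) - 1) =
        (Nat.totient (k * m ^ 2) : ℚ) / (Nat.totient (l * n ^ 2) : ℚ) := by
  rintro ⟨m, n, hm, hn, h⟩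
  have hp_mem : p ∈ (k * l).primeFactors := hp ▸ maxPrimeFac_mem (one_lt_mul_of_lt_of_le hk hl)
  have hpp := prime_of_mem_primeFactors hp_mem
  have hle : ∀ q ∈ (k * l).primeFactors, q ≤ p := fun q hq => hp ▸ le_maxPrimeFac_s6 hq
  have hkl : k * l ≠ 0 := by positivity
  have hnat : φ (l * n ^ 2) = p ^ (k.factorization p + 1) * φ (k * m ^ 2) := by
    have hden : (φ (l * n ^ 2) : ℚ) ≠ 0 := by exact_mod_cast (totient_pos.2 (by positivity)).ne'
    have hp0 : (p : ℚ) ≠ 0 := by exact_mod_cast hpp.ne_zero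
    rw [← factorization_def k hpp, eq_div_iff hden, zpow_sub₀ hp0, zpow_neg, zpow_natCast,
      zpow_one] at h
    field_simp at h
    exact_mod_cast h
  exact totient_mul_sq_ne_pow_mul_totient_mul_sq hpp (by omega)
    (fun q hq => hle q (primeFactors_mono (dvd_mul_right k l) hkl hq))
    (fun q hq => hle q (primeFactors_mono (dvd_mul_left l k) hkl hq)) hdvdk hndvdl
    hm.ne' hn.ne' hnat
end

section
/- Let a, b, m and n be positive integers with min{a, b} > 1. If φ(m^a) = φ(n^b), then m^a = n^b. -/
/-!
Every `m ^ a` with `a ≥ 2` is powerful, and `φ` is injective on powerful numbers. If `p` is the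
largest prime factor of a powerful `N = p ^ k * N'`, then `v_p (φ N) = k - 1`, because `p` divides
neither `p - 1` nor `φ N'`; as `k ≠ 1`, this recovers `k` from `φ N`. Cancelling `φ (p ^ k)` then
reduces the claim to the `p`-smooth parts, and one inducts on the smoothness bound.
-/

namespace Nat

-- Equivalent to `p ∣ n → p ^ 2 ∣ n` for all primes `p`.
def Powerful (n : ℕ) : Prop := ∀ p, n.factorization p ≠ 1

theorem powerful_pow (m : ℕ) {a : ℕ} (ha : a ≠ 1) : (m ^ a).Powerful := by
  intro p hp
  rw [factorization_pow, Finsupp.smul_apply, smul_eq_mul] at hp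
  exact ha (Nat.eq_one_of_mul_eq_one_right hp)

theorem not_dvd_totient_of_mem_smoothNumbers {p n : ℕ} (hp : p.Prime)
    (hn : n ∈ p.smoothNumbers) : ¬ p ∣ φ n := by
  rw [totient_eq_prod_factorization hn.1]
  refine hp.prime.not_dvd_finsuppProd fun q hq hdvd => ?_
  have hq' : q.Prime := prime_of_mem_primeFactors hq
  have hqp : q < p := mem_smoothNumbers'.1 hn q hq' (dvd_of_mem_primeFactors hq)
  rcases hp.dvd_mul.1 hdvd with h | h
  · exact absurd (le_of_dvd hq'.pos (hp.dvd_of_dvd_pow h)) hqp.not_ge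
  · exact absurd (le_of_dvd (Nat.sub_pos_of_lt hq'.one_lt) h) (by omega)

theorem factorization_totient_prime_pow_mul {p n : ℕ} (hp : p.Prime) (k : ℕ)
    (hn : n ∈ p.smoothNumbers) : (φ (p ^ k * n)).factorization p = k - 1 := by
  have hcop : (p ^ k).Coprime n := (hp.smoothNumbers_coprime hn).pow_left k
  rw [totient_mul hcop, factorization_mul (totient_pos.2 (pow_pos hp.pos k)).ne'
    (totient_pos.2 (pos_of_ne_zero hn.1)).ne', Finsupp.add_apply,
    factorization_eq_zero_of_not_dvd (not_dvd_totient_of_mem_smoothNumbers hp hn), add_zero]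
  rcases k with _ | k
  · simp
  · have hp1 : ¬ p ∣ p - 1 := fun h => by
      have := le_of_dvd (Nat.sub_pos_of_lt hp.one_lt) h; have := hp.pos; omega
    rw [totient_prime_pow_succ hp, factorization_mul (pow_pos hp.pos k).ne'
      (Nat.sub_pos_of_lt hp.one_lt).ne', Finsupp.add_apply, factorization_pow_self hp,
      factorization_eq_zero_of_not_dvd hp1]
    rfl

theorem powerful_prime_pow_mul_iff {p n : ℕ} (hp : p.Prime) (k : ℕ)
    (hn : n ∈ p.smoothNumbers) : (p ^ k * n).Powerful ↔ k ≠ 1 ∧ n.Powerful := by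
  have hnp : n.factorization p = 0 :=
    factorization_eq_zero_of_not_dvd fun h => (mem_smoothNumbers'.1 hn p hp h).false
  have hfac : ∀ q, (p ^ k * n).factorization q = Finsupp.single p k q + n.factorization q :=
    fun q => by rw [factorization_mul (pow_pos hp.pos k).ne' hn.1, hp.factorization_pow]; rfl
  refine ⟨fun h => ⟨fun hk => h p (by rw [hfac, hnp, hk]; simp), fun q hq => h q ?_⟩,
    fun ⟨hk, h⟩ q => ?_⟩
  · rcases eq_or_ne p q with rfl | hpq
    · simp [hnp] at hq
    · simp [hfac, hpq, hq]
  · rcases eq_or_ne p q with rfl | hpq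
    · simpa [hfac, hnp] using hk
    · simpa [hfac, hpq] using h q

theorem totient_injOn_powerful_smoothNumbers (B : ℕ) :
    Set.InjOn φ {n ∈ B.smoothNumbers | n.Powerful} := by
  induction B with
  | zero =>
    rw [smoothNumbers_zero]
    exact fun _ h₁ _ h₂ _ => h₁.1.trans h₂.1.symm
  | succ p ih =>
    by_cases hp : p.Prime
    swap
    · rwa [smoothNumbers_succ hp]
    rintro _ ⟨hM, hMP⟩ _ ⟨hN, hNP⟩ htot
    obtain ⟨⟨k, M, hM'⟩, hkM⟩ := (equivProdNatSmoothNumbers hp).surjective ⟨_, hM⟩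
    obtain ⟨⟨j, N, hN'⟩, hjN⟩ := (equivProdNatSmoothNumbers hp).surjective ⟨_, hN⟩
    rw [Subtype.ext_iff, equivProdNatSmoothNumbers_apply] at hkM hjN
    subst hkM hjN
    rw [powerful_prime_pow_mul_iff hp k hM'] at hMP
    rw [powerful_prime_pow_mul_iff hp j hN'] at hNP
    have hkj : k = j := by
      have := congr_arg (fun x => x.factorization p) htot
      simp only [factorization_totient_prime_pow_mul hp _ hM',
        factorization_totient_prime_pow_mul hp _ hN'] at this
      omega
    subst hkj
    have hcop : ∀ {m}, m ∈ p.smoothNumbers → (p ^ k).Coprime m :=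
      fun hm => (hp.smoothNumbers_coprime hm).pow_left k
    rw [totient_mul (hcop hM'), totient_mul (hcop hN')] at htot
    rw [ih ⟨hM', hMP.2⟩ ⟨hN', hNP.2⟩
      (Nat.eq_of_mul_eq_mul_left (totient_pos.2 (pow_pos hp.pos k)) htot)]

theorem totient_injOn_powerful : Set.InjOn φ {n | n.Powerful} := by
  intro M hM N hN htot
  rcases eq_or_ne M 0 with rfl | hM0
  · exact (totient_eq_zero.1 (htot.symm.trans totient_zero)).symm
  have hN0 : N ≠ 0 := fun h => hM0 (totient_eq_zero.1 (htot.trans (by rw [h, totient_zero])))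
  exact totient_injOn_powerful_smoothNumbers (max M N + 1)
    ⟨mem_smoothNumbers_of_lt (pos_of_ne_zero hM0) (by omega), hM⟩
    ⟨mem_smoothNumbers_of_lt (pos_of_ne_zero hN0) (by omega), hN⟩ htot

end Nat

theorem stmt_13_general (a b m n : ℕ)
    (hmin : 1 < min a b) (h : Nat.totient (m ^ a) = Nat.totient (n ^ b)) :
    m ^ a = n ^ b :=
  Nat.totient_injOn_powerful (Nat.powerful_pow m (by omega)) (Nat.powerful_pow n (by omega)) h

theorem stmt_13 (a b m n : ℕ) (ha : 0 < a) (hb : 0 < b) (hm : 0 < m) (hn : 0 < n)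
    (hmin : 1 < min a b) (h : Nat.totient (m ^ a) = Nat.totient (n ^ b)) :
    m ^ a = n ^ b :=
  stmt_13_general a b m n hmin h
end

section
/- Let a, b be positive integers with gcd(a, b) > 1 and let m, n be positive integers with m·n > 1, and let q = P(m·n) be the largest prime factor of m·n. Then v_q(φ(m^a)/φ(n^b)) equals a·v_q(m) − b·v_q(n) if v_q(m) ≠ 0 and v_q(n) ≠ 0; it equals a·v_q(m) − 1 if v_q(n) = 0; and it equals −b·v_q(n) + 1 if v_q(m) = 0. -/
/-!
Let `q` be at least every prime factor of `N` and write `N = q^k M` with `q ∤ M`. Then `q` does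
not divide `φ(M)`, since by Euler's product formula `φ(M)` divides `M ∏_{p ∣ M} (p - 1)`, whose
prime factors are all `< q`. So `φ(N) = q^(k-1) (q-1) φ(M)` gives `v_q(φ(N)) = v_q(N) - 1`, which
(with truncated subtraction) holds for `k = 0` as well. Applied to `m^a` and `n^b`, one of which
is divisible by `q`, this yields the three cases.
-/

namespace Nat

theorem Prime.not_dvd_totient_of_forall_lt_s16 {q N : ℕ} (hq : q.Prime) (hN : N ≠ 0)
    (h : ∀ p ∈ N.primeFactors, p < q) : ¬ q ∣ φ N := by
  intro hdvd
  have hEuler : q ∣ N * ∏ p ∈ N.primeFactors, (p - 1) := by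
    rw [← totient_mul_prod_primeFactors]
    exact dvd_mul_of_dvd_left hdvd _
  rcases hq.dvd_mul.1 hEuler with hqN | hqprod
  · exact lt_irrefl q (h q (hq.mem_primeFactors hqN hN))
  · obtain ⟨p, hp, hqp⟩ := (hq.prime.dvd_finsetProd_iff _).1 hqprod
    have := (prime_of_mem_primeFactors hp).two_le
    have := le_of_dvd (by omega) hqp
    have := h p hp
    omega

theorem padicValNat_totient_of_forall_le {q N : ℕ} (hq : q.Prime) (hN : N ≠ 0)
    (h : ∀ p ∈ N.primeFactors, p ≤ q) : padicValNat q (φ N) = padicValNat q N - 1 := by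
  have : Fact q.Prime := ⟨hq⟩
  set M := ordCompl[q] N
  have hM : M ≠ 0 := (ordCompl_pos q hN).ne'
  have hqM : ¬ q ∣ M := not_dvd_ordCompl hq hN
  have hvM : padicValNat q (φ M) = 0 := by
    refine padicValNat.eq_zero_of_not_dvd (hq.not_dvd_totient_of_forall_lt_s16 hM fun p hp => ?_)
    refine lt_of_le_of_ne (h p (primeFactors_mono (ordCompl_dvd N q) hN hp)) ?_
    rintro rfl
    exact hqM (dvd_of_mem_primeFactors hp)
  obtain ⟨k, hk⟩ : ∃ k, padicValNat q N = k := ⟨_, rfl⟩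
  have hsplit : N = q ^ k * M := by
    rw [← hk, ← factorization_def N hq, ordProj_mul_ordCompl_eq_self]
  rcases k.eq_zero_or_pos with rfl | hkpos
  · rw [hk, hsplit, pow_zero, one_mul, hvM]
  have hcop : Coprime (q ^ k) M := (hq.coprime_iff_not_dvd.2 hqM).pow_left k
  have hq1 : q - 1 ≠ 0 := by have := hq.two_le; omega
  have hvq1 : padicValNat q (q - 1) = 0 :=
    padicValNat.eq_zero_of_not_dvd (not_dvd_of_pos_of_lt (by omega) (by omega))
  have hqk : q ^ (k - 1) ≠ 0 := pow_ne_zero _ hq.ne_zero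
  rw [hk, hsplit, totient_mul hcop, totient_prime_pow hq hkpos,
    padicValNat.mul (mul_ne_zero hqk hq1) (totient_pos.2 (pos_of_ne_zero hM)).ne',
    padicValNat.mul hqk hq1, padicValNat.prime_pow, hvq1, hvM, add_zero, add_zero]

theorem padicValNat_totient_pow_of_forall_le {q N : ℕ} (hq : q.Prime) (hN : N ≠ 0)
    (h : ∀ p ∈ N.primeFactors, p ≤ q) (a : ℕ) :
    padicValNat q (φ (N ^ a)) = a * padicValNat q N - 1 := by
  have : Fact q.Prime := ⟨hq⟩
  rw [padicValNat_totient_of_forall_le hq (pow_ne_zero a hN)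
    (fun p hp => h p ?_), padicValNat.pow]
  have hp' := prime_of_mem_primeFactors hp
  exact mem_primeFactors.2 ⟨hp', hp'.dvd_of_dvd_pow (dvd_of_mem_primeFactors hp), hN⟩

theorem padicValRat_totient_pow_div_totient_pow {q m n : ℕ} (hq : q.Prime) (hm : m ≠ 0)
    (hn : n ≠ 0) (hmq : ∀ p ∈ m.primeFactors, p ≤ q) (hnq : ∀ p ∈ n.primeFactors, p ≤ q)
    (a b : ℕ) :
    padicValRat q ((φ (m ^ a) : ℚ) / (φ (n ^ b) : ℚ)) =
      ((a * padicValNat q m - 1 : ℕ) : ℤ) - ((b * padicValNat q n - 1 : ℕ) : ℤ) := by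
  have : Fact q.Prime := ⟨hq⟩
  rw [padicValRat.div (mod_cast (totient_pos.2 (pow_pos (pos_of_ne_zero hm) a)).ne')
    (mod_cast (totient_pos.2 (pow_pos (pos_of_ne_zero hn) b)).ne'), padicValRat.of_nat,
    padicValRat.of_nat, padicValNat_totient_pow_of_forall_le hq hm hmq,
    padicValNat_totient_pow_of_forall_le hq hn hnq]

end Nat

theorem maxPrimeFac_isGreatest {N : ℕ} (hN : 1 < N) :
    IsGreatest N.primeFactors (maxPrimeFac N) := by
  have hne := Nat.nonempty_primeFactors.2 hN
  have hmax : maxPrimeFac N = N.primeFactors.max' hne := by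
    rw [maxPrimeFac, ← Finset.coe_max' hne]
    rfl
  exact hmax ▸ Finset.isGreatest_max' _ hne

theorem stmt_16_general (a b m n q : ℕ) (ha : 0 < a) (hb : 0 < b) (hm : 0 < m) (hn : 0 < n)
    (hmn : 1 < m * n) (hq : q = maxPrimeFac (m * n)) :
    (padicValNat q m ≠ 0 → padicValNat q n ≠ 0 →
      padicValRat q ((Nat.totient (m ^ a) : ℚ) / (Nat.totient (n ^ b) : ℚ)) =
        (a : ℤ) * padicValNat q m - (b : ℤ) * padicValNat q n) ∧
    (padicValNat q n = 0 →
      padicValRat q ((Nat.totient (m ^ a) : ℚ) / (Nat.totient (n ^ b) : ℚ)) =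
        (a : ℤ) * padicValNat q m - 1) ∧
    (padicValNat q m = 0 →
      padicValRat q ((Nat.totient (m ^ a) : ℚ) / (Nat.totient (n ^ b) : ℚ)) =
        -((b : ℤ) * padicValNat q n) + 1) := by
  obtain ⟨hqmem, hqmax⟩ := hq ▸ maxPrimeFac_isGreatest hmn
  have hqp : q.Prime := Nat.prime_of_mem_primeFactors hqmem
  have : Fact q.Prime := ⟨hqp⟩
  have hmn0 : m * n ≠ 0 := by positivity
  have hmle : ∀ p ∈ m.primeFactors, p ≤ q := fun p hp =>
    hqmax (Nat.primeFactors_mono (dvd_mul_right m n) hmn0 hp)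
  have hnle : ∀ p ∈ n.primeFactors, p ≤ q := fun p hp =>
    hqmax (Nat.primeFactors_mono (dvd_mul_left n m) hmn0 hp)
  have hvmn : padicValNat q m + padicValNat q n ≠ 0 := by
    rw [← padicValNat.mul hm.ne' hn.ne']
    exact Nat.one_le_iff_ne_zero.1 <|
      one_le_padicValNat_of_dvd hmn0 (Nat.dvd_of_mem_primeFactors hqmem)
  have cast_pred : ∀ {c v : ℕ}, 0 < c → v ≠ 0 → ((c * v - 1 : ℕ) : ℤ) = c * v - 1 :=
    fun hc hv => by have := Nat.mul_pos hc (Nat.pos_of_ne_zero hv); omega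
  rw [Nat.padicValRat_totient_pow_div_totient_pow hqp hm.ne' hn.ne' hmle hnle]
  refine ⟨fun hvm hvn => ?_, fun hvn => ?_, fun hvm => ?_⟩
  · rw [cast_pred ha hvm, cast_pred hb hvn]
    ring
  · rw [cast_pred ha (by omega), hvn, mul_zero, Nat.zero_sub, Nat.cast_zero, sub_zero]
  · rw [cast_pred hb (by omega), hvm, mul_zero, Nat.zero_sub, Nat.cast_zero]
    ring

theorem stmt_16 (a b m n q : ℕ) (ha : 0 < a) (hb : 0 < b) (hm : 0 < m) (hn : 0 < n)
    (hab : 1 < Nat.gcd a b) (hmn : 1 < m * n) (hq : q = maxPrimeFac (m * n)) :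
    (padicValNat q m ≠ 0 → padicValNat q n ≠ 0 →
      padicValRat q ((Nat.totient (m ^ a) : ℚ) / (Nat.totient (n ^ b) : ℚ)) =
        (a : ℤ) * padicValNat q m - (b : ℤ) * padicValNat q n) ∧
    (padicValNat q n = 0 →
      padicValRat q ((Nat.totient (m ^ a) : ℚ) / (Nat.totient (n ^ b) : ℚ)) =
        (a : ℤ) * padicValNat q m - 1) ∧
    (padicValNat q m = 0 →
      padicValRat q ((Nat.totient (m ^ a) : ℚ) / (Nat.totient (n ^ b) : ℚ)) =
        -((b : ℤ) * padicValNat q n) + 1) :=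
  stmt_16_general a b m n q ha hb hm hn hmn hq
end
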